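/- For all s ∈ ℝ one has g_ε(β′(s), β′(s)) = ⟨β′(s), β′(s)⟩ − (1+ε²)⟨β′(s), J₁β(s)⟩² = −ε²/B, the Berger metric being taken at the point β(s). In particular g_ε(β′(s), β′(s)) > 0 when λ = −1 (β is spacelike) and g_ε(β′(s), β′(s)) < 0 when λ = 1 (β is timelike). -/

import Mathlib

/-!
`β` has unit Euclidean speed (this uses `λ² = 1`) and `⟨β′, J₁β⟩ = λ · 2d/(1+d²)`.
Writing `d = (a - b)/k` with `a = √(λB)`, `b = ε|ν|`, `k = √(λ+ν²)`, the relation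
`a² - b² = k²` gives `2d/(1+d²) = k/a`, hence `g_ε(β′,β′) = 1 - (1+ε²)(λ+ν²)/(λB) = -ε²/B`.
The sign claims follow since `λB > 0`.
-/

open Matrix Real

noncomputable def J1 : Matrix (Fin 4) (Fin 4) ℝ :=
  !![0,-1,0,0; 1,0,0,0; 0,0,0,-1; 0,0,1,0]

noncomputable def torusCurve (lam d s : ℝ) : Fin 4 → ℝ :=
  (1 / √(1 + d ^ 2)) • ![d * cos (s / d), lam * d * sin (s / d), cos (d * s), lam * sin (d * s)]

noncomputable def torusCurveVelocity (lam d s : ℝ) : Fin 4 → ℝ :=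
  (1 / √(1 + d ^ 2)) •
    ![-sin (s / d), lam * cos (s / d), -(d * sin (d * s)), lam * (d * cos (d * s))]

theorem hasDerivAt_torusCurve (lam : ℝ) {d : ℝ} (hd : d ≠ 0) (s : ℝ) :
    HasDerivAt (torusCurve lam d) (torusCurveVelocity lam d s) s := by
  have hdiv : HasDerivAt (fun t : ℝ => t / d) (1 / d) s := (hasDerivAt_id s).div_const d
  have hmul : HasDerivAt (fun t : ℝ => d * t) d s := by
    simpa using (hasDerivAt_id s).const_mul d
  refine HasDerivAt.const_smul (1 / √(1 + d ^ 2)) (hasDerivAt_pi.2 fun i => ?_)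
  fin_cases i
  · exact (hdiv.cos.const_mul d).congr_deriv
      (show d * (-sin (s / d) * (1 / d)) = -sin (s / d) by field_simp)
  · exact (hdiv.sin.const_mul (lam * d)).congr_deriv
      (show lam * d * (cos (s / d) * (1 / d)) = lam * cos (s / d) by field_simp)
  · exact hmul.cos.congr_deriv (show -sin (d * s) * d = -(d * sin (d * s)) by ring)
  · exact (hmul.sin.const_mul lam).congr_deriv
      (show lam * (cos (d * s) * d) = lam * (d * cos (d * s)) by ring)

theorem torusCurveVelocity_dotProduct_self {lam : ℝ} (hlam : lam ^ 2 = 1) (d s : ℝ) :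
    torusCurveVelocity lam d s ⬝ᵥ torusCurveVelocity lam d s = 1 := by
  have hr : √(1 + d ^ 2) ^ 2 = 1 + d ^ 2 := sq_sqrt (by positivity)
  simp only [dotProduct, torusCurveVelocity, one_div, Pi.smul_apply, smul_eq_mul,
    Fin.sum_univ_four, Fin.isValue, cons_val_zero, mul_neg, neg_mul, neg_neg, cons_val_one,
    cons_val]
  field_simp
  linear_combination sin_sq_add_cos_sq (s / d) + d ^ 2 * sin_sq_add_cos_sq (d * s)
    + (cos (s / d) ^ 2 + d ^ 2 * cos (d * s) ^ 2) * hlam - hr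

theorem torusCurveVelocity_dotProduct_J1_mulVec (lam d s : ℝ) :
    torusCurveVelocity lam d s ⬝ᵥ (J1 *ᵥ torusCurve lam d s) = lam * (2 * d / (1 + d ^ 2)) := by
  have hr : √(1 + d ^ 2) ^ 2 = 1 + d ^ 2 := sq_sqrt (by positivity)
  simp only [dotProduct, torusCurveVelocity, one_div, Pi.smul_apply, smul_eq_mul, mulVec, J1,
    of_apply, cons_val', cons_val_fin_one, torusCurve, Fin.sum_univ_four, Fin.isValue,
    cons_val_zero, cons_val_one, cons_val, mul_neg, zero_mul, neg_mul, one_mul, zero_add,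
    add_zero, neg_neg]
  field_simp
  linear_combination lam * d * (1 + d ^ 2) * sin_sq_add_cos_sq (s / d)
    + lam * d * (1 + d ^ 2) * sin_sq_add_cos_sq (d * s) - 2 * lam * d * hr

theorem two_mul_div_one_add_sq_eq {a b k : ℝ} (hk : k ≠ 0) (ha : a ≠ 0)
    (h : a ^ 2 - b ^ 2 = k ^ 2) :
    2 * ((a - b) / k) / (1 + ((a - b) / k) ^ 2) = k / a := by
  have hab : a - b ≠ 0 := by
    rintro hab
    rw [sub_eq_zero.1 hab, sub_self, eq_comm, pow_eq_zero_iff two_ne_zero] at h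
    exact hk h
  rw [div_eq_div_iff (by positivity) ha]
  field_simp
  linear_combination h

theorem two_mul_div_one_add_sq_of_sqrt_sub_div {A b : ℝ} (h : b ^ 2 < A) :
    0 < (√A - b) / √(A - b ^ 2) ∧
      2 * ((√A - b) / √(A - b ^ 2)) / (1 + ((√A - b) / √(A - b ^ 2)) ^ 2)
        = √(A - b ^ 2) / √A := by
  have hk : 0 < √(A - b ^ 2) := sqrt_pos.2 (sub_pos.2 h)
  have hA : 0 < A := (sq_nonneg b).trans_lt h
  have hb : b < √A := (le_abs_self b).trans_lt <| by
    rw [← sqrt_sq_eq_abs]; exact sqrt_lt_sqrt (sq_nonneg b) h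
  refine ⟨div_pos (sub_pos.2 hb) hk, two_mul_div_one_add_sq_eq hk.ne' (sqrt_pos.2 hA).ne' ?_⟩
  rw [sq_sqrt hA.le, sq_sqrt (sub_pos.2 h).le]

section BergerParameters

variable {ε lam ν B : ℝ}

theorem lam_sq_eq_one_of_case (hcase : (lam = -1 ∧ 1 < ν ^ 2) ∨ (lam = 1 ∧ ν ≠ 0)) :
    lam ^ 2 = 1 := by
  rcases hcase with ⟨rfl, -⟩ | ⟨rfl, -⟩ <;> norm_num

theorem lam_add_sq_pos_of_case (hcase : (lam = -1 ∧ 1 < ν ^ 2) ∨ (lam = 1 ∧ ν ≠ 0)) :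
    0 < lam + ν ^ 2 := by
  rcases hcase with ⟨rfl, hν⟩ | ⟨rfl, -⟩
  · linarith
  · positivity

theorem lam_mul_sub_sq_eq (hlam : lam ^ 2 = 1) (hB : B = 1 + lam * ν ^ 2 * (1 + ε ^ 2)) :
    lam * B - (ε * |ν|) ^ 2 = lam + ν ^ 2 := by
  rw [hB, mul_pow, sq_abs]
  linear_combination (ν ^ 2 * (1 + ε ^ 2)) * hlam

theorem sq_lt_lam_mul_of_case (hcase : (lam = -1 ∧ 1 < ν ^ 2) ∨ (lam = 1 ∧ ν ≠ 0))
    (hB : B = 1 + lam * ν ^ 2 * (1 + ε ^ 2)) : (ε * |ν|) ^ 2 < lam * B := by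
  linarith [lam_mul_sub_sq_eq (lam_sq_eq_one_of_case hcase) hB, lam_add_sq_pos_of_case hcase]

theorem one_sub_mul_div_lam_mul_eq (hcase : (lam = -1 ∧ 1 < ν ^ 2) ∨ (lam = 1 ∧ ν ≠ 0))
    (hB : B = 1 + lam * ν ^ 2 * (1 + ε ^ 2)) :
    1 - (1 + ε ^ 2) * ((lam + ν ^ 2) / (lam * B)) = -ε ^ 2 / B := by
  have hlam := lam_sq_eq_one_of_case hcase
  have hlamB : lam * B ≠ 0 := ((sq_nonneg _).trans_lt (sq_lt_lam_mul_of_case hcase hB)).ne'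
  have hlam0 : lam ≠ 0 := left_ne_zero_of_mul hlamB
  have hB0 : B ≠ 0 := right_ne_zero_of_mul hlamB
  field_simp
  rw [hB]
  linear_combination ν ^ 2 * (1 + ε ^ 2) * hlam

end BergerParameters

/-- along the curve `β`, the Berger metric (taken at the point
`β(s)`) satisfies `g_ε(β′,β′) = ⟨β′,β′⟩ − (1+ε²)⟨β′, J₁β⟩² = −ε²/B`; in
particular `β` is spacelike when `λ = −1` and timelike when `λ = 1`. -/
theorem stmt16 (ε lam ν B d : ℝ) (hε : 0 < ε)
    (hcase : (lam = -1 ∧ 1 < ν ^ 2) ∨ (lam = 1 ∧ ν ≠ 0))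
    (hB : B = 1 + lam * ν ^ 2 * (1 + ε ^ 2))
    (hd : d = (Real.sqrt (lam * B) - ε * |ν|) / Real.sqrt (lam + ν ^ 2))
    (β : ℝ → Fin 4 → ℝ)
    (hβ : ∀ s, β s = (1 / Real.sqrt (1 + d ^ 2)) •
      ![d * cos (s / d), lam * d * sin (s / d), cos (d * s), lam * sin (d * s)]) :
    ∀ s : ℝ,
      deriv β s ⬝ᵥ deriv β s
        - (1 + ε ^ 2) * (deriv β s ⬝ᵥ (J1 *ᵥ β s)) ^ 2 = -ε ^ 2 / B ∧
      (lam = -1 → 0 < -ε ^ 2 / B) ∧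
      (lam = 1 → -ε ^ 2 / B < 0) := by
  have hlam := lam_sq_eq_one_of_case hcase
  have hlt := sq_lt_lam_mul_of_case hcase hB
  obtain ⟨hd0, hratio⟩ := two_mul_div_one_add_sq_of_sqrt_sub_div hlt
  rw [lam_mul_sub_sq_eq hlam hB, ← hd] at hd0 hratio
  have hβ' : β = torusCurve lam d := funext hβ
  have hlamB : 0 < lam * B := (sq_nonneg _).trans_lt hlt
  have hε2 : -ε ^ 2 < 0 := neg_neg_of_pos (pow_pos hε 2)
  refine fun s => ⟨?_, fun h => ?_, fun h => ?_⟩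
  · rw [hβ', (hasDerivAt_torusCurve lam hd0.ne' s).deriv, torusCurveVelocity_dotProduct_self hlam,
      torusCurveVelocity_dotProduct_J1_mulVec, mul_pow, hlam, one_mul,
      hratio, div_pow, sq_sqrt hlamB.le, sq_sqrt (lam_add_sq_pos_of_case hcase).le]
    exact one_sub_mul_div_lam_mul_eq hcase hB
  · subst h
    exact div_pos_of_neg_of_neg hε2 (by linarith)
  · subst h
    exact div_neg_of_neg_of_pos hε2 (by linarith)
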